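/- For constants c₁,…,c₆ with ξ(x,y) = c₁x + c₂y + c₃ and η(x,y) = c₄x + c₅y + c₆ satisfying the linearized symmetry condition η_x + (η_y − ξ_x)ω − ξ_y·ω² = ξ·ω_x + η·ω_y for the Schottky ω(x,y) = β/(p+rβ) (b > c > 0, p > 0, r > 0), it follows that c₁ = c₂ = c₄ = c₅ = 0 and c₃ = r·c₆; i.e., the only affine symmetries are the translations (ξ,η) = (r·c₆, c₆). -/

import Mathlib

/-!
Along the characteristics `x - r y = const` the function `ω` is constant: `ω x y = W (x - r y)`
with `W = β / (p + r β)` a function of one variable. At `y = 0` the symmetry condition therefore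
reads `c₄ + (c₅ - c₁) W - c₂ W² = ((c₁ - r c₄) x + c₃ - r c₆) W'`, and clearing the denominator
`(p + r β)²` turns it into a linear relation between `1`, `β`, `β²`, `β'` and `x β'`, where
`β u = ((b - c) e^{-bu} + c) e^{cu}`. Comparing growth at `+∞` (first at order `e^{2cu}`, then at
orders `x e^{cu}` and `e^{cu}`) and finally using that `e^{-bu}` and `e^{-cu}` are linearly
independent forces every coefficient to vanish.
-/

open Filter Real Topology

lemma tendsto_affine_mul_exp_neg_mul {a : ℝ} (ha : 0 < a) (α γ : ℝ) :
    Tendsto (fun u => (α * u + γ) * exp (-a * u)) atTop (𝓝 0) := by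
  have h1 := (tendsto_rpow_mul_exp_neg_mul_atTop_nhds_zero 1 a ha).const_mul α
  have h0 := (tendsto_rpow_mul_exp_neg_mul_atTop_nhds_zero 0 a ha).const_mul γ
  simpa [add_mul, mul_assoc] using h1.add h0

lemma tendsto_exp_neg_mul {a : ℝ} (ha : 0 < a) : Tendsto (fun u => exp (-a * u)) atTop (𝓝 0) := by
  simpa using tendsto_affine_mul_exp_neg_mul ha 0 1

lemma eq_zero_of_tendsto_affine {α γ : ℝ} (h : Tendsto (fun u => α * u + γ) atTop (𝓝 0)) :
    α = 0 ∧ γ = 0 := by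
  have hα : α = 0 := by
    have hshift := (h.comp (tendsto_atTop_add_const_right atTop 1 tendsto_id)).sub h
    refine tendsto_nhds_unique (tendsto_const_nhds.congr fun u => ?_) (by simpa using hshift)
    ring
  subst hα
  simpa using h

lemma eq_zero_of_forall_mul_exp_add_mul_exp_eq_zero {μ ν A B : ℝ} (hμν : μ ≠ ν)
    (h : ∀ u, A * exp (μ * u) + B * exp (ν * u) = 0) : A = 0 ∧ B = 0 := by
  have h0 : A + B = 0 := by simpa using h 0
  have h1 := h 1
  simp only [mul_one] at h1
  have hAexp : A * (exp μ - exp ν) = 0 := by linear_combination h1 - exp ν * h0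
  have hA : A = 0 := by simpa [sub_ne_zero.2 (exp_injective.ne hμν)] using hAexp
  exact ⟨hA, by linear_combination h0 - hA⟩

noncomputable def schottky (b c u : ℝ) : ℝ := ((b - c) * exp (-b * u) + c) * exp (c * u)

noncomputable def schottkyRatio (b c p r u : ℝ) : ℝ := schottky b c u / (p + r * schottky b c u)

section Schottky

variable {b c : ℝ}

lemma schottky_pos (hbc : c < b) (hc : 0 < c) (u : ℝ) : 0 < schottky b c u := by
  have := sub_pos.2 hbc
  unfold schottky
  positivity

lemma hasDerivAt_schottky (u : ℝ) : HasDerivAt (schottky b c)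
    (((b - c) * (c - b) * exp (-b * u) + c ^ 2) * exp (c * u)) u := by
  have hb := ((((hasDerivAt_id' u).const_mul (-b)).exp).const_mul (b - c)).add_const c
  have hc := ((hasDerivAt_id' u).const_mul c).exp
  exact (hb.mul hc).congr_deriv (by ring)

lemma schottky_relation_div_exp {A P Q α γ : ℝ}
    (h : ∀ u, A + P * schottky b c u + Q * schottky b c u ^ 2
      + (α * u + γ) * deriv (schottky b c) u = 0) (u : ℝ) :
    A * exp (-c * u) ^ 2 + P * exp (-c * u) * ((b - c) * exp (-b * u) + c)
      + Q * ((b - c) * exp (-b * u) + c) ^ 2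
      + (α * u + γ) * exp (-c * u) * ((b - c) * (c - b) * exp (-b * u) + c ^ 2) = 0 := by
  have hu := h u
  rw [(hasDerivAt_schottky u).deriv, schottky] at hu
  generalize exp (-b * u) = d at hu ⊢
  rw [neg_mul c, exp_neg]
  field_simp
  linear_combination hu

lemma quadCoeff_eq_zero_of_schottky_relation (hbc : c < b) (hc : 0 < c) {A P Q α γ : ℝ}
    (h : ∀ u, A + P * schottky b c u + Q * schottky b c u ^ 2
      + (α * u + γ) * deriv (schottky b c) u = 0) : Q = 0 := by
  have hd := tendsto_exp_neg_mul (hc.trans hbc)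
  have he := tendsto_exp_neg_mul hc
  have hG : Tendsto (fun u => (b - c) * exp (-b * u) + c) atTop (𝓝 c) := by
    simpa using (hd.const_mul (b - c)).add_const c
  have hH : Tendsto (fun u => (b - c) * (c - b) * exp (-b * u) + c ^ 2) atTop (𝓝 (c ^ 2)) := by
    simpa using (hd.const_mul ((b - c) * (c - b))).add_const (c ^ 2)
  have hlim := (((he.pow 2).const_mul A).add ((he.const_mul P).mul hG)).add
    ((hG.pow 2).const_mul Q) |>.add ((tendsto_affine_mul_exp_neg_mul hc α γ).mul hH)
  simp only [ne_eq, OfNat.ofNat_ne_zero, not_false_eq_true, zero_pow, mul_zero, zero_mul,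
    zero_add, add_zero] at hlim
  have hQc : Q * c ^ 2 = 0 :=
    tendsto_nhds_unique (f := fun _ => 0) (hlim.congr (schottky_relation_div_exp h))
      tendsto_const_nhds
  simpa [hc.ne'] using hQc

theorem coeffs_eq_zero_of_schottky_relation (hbc : c < b) (hc : 0 < c) {A P Q α γ : ℝ}
    (h : ∀ u, A + P * schottky b c u + Q * schottky b c u ^ 2
      + (α * u + γ) * deriv (schottky b c) u = 0) :
    A = 0 ∧ P = 0 ∧ Q = 0 ∧ α = 0 ∧ γ = 0 := by
  have hQ := quadCoeff_eq_zero_of_schottky_relation hbc hc h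
  subst hQ
  have hlinear : ∀ u, A * exp (-c * u) + P * ((b - c) * exp (-b * u) + c)
      + (α * u + γ) * ((b - c) * (c - b) * exp (-b * u) + c ^ 2) = 0 := by
    intro u
    refine (mul_eq_zero.mp ?_).resolve_left (exp_pos (-c * u)).ne'
    linear_combination schottky_relation_div_exp h u
  obtain ⟨hαc, hPγ⟩ : α * c ^ 2 = 0 ∧ P * c + γ * c ^ 2 = 0 := by
    apply eq_zero_of_tendsto_affine
    have hlim := (((tendsto_exp_neg_mul hc).const_mul A).add
      ((tendsto_exp_neg_mul (hc.trans hbc)).const_mul (P * (b - c)))).add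
      ((tendsto_affine_mul_exp_neg_mul (hc.trans hbc) α γ).const_mul ((b - c) * (c - b))) |>.neg
    simp only [mul_zero, add_zero, neg_zero] at hlim
    exact hlim.congr fun u => by linear_combination (-1) * hlinear u
  have hα : α = 0 := by simpa [hc.ne'] using hαc
  subst hα
  obtain ⟨hA, hK⟩ := eq_zero_of_forall_mul_exp_add_mul_exp_eq_zero (μ := -c) (ν := -b) (A := A)
    (B := (b - c) * (P + γ * (c - b))) (by linarith) fun u => by
      linear_combination hlinear u - hPγ
  have h1 : P + γ * (c - b) = 0 := by simpa [(sub_pos.2 hbc).ne'] using hK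
  have h2 : P + γ * c = 0 := by
    refine (mul_eq_zero.mp ?_).resolve_left hc.ne'
    linear_combination hPγ
  have hγ : γ = 0 := by
    refine (mul_eq_zero.mp ?_).resolve_left (hc.trans hbc).ne'
    linear_combination h2 - h1
  exact ⟨hA, by linear_combination h2 - c * hγ, rfl, rfl, hγ⟩

lemma schottky_denom_pos (hbc : c < b) (hc : 0 < c) {p r : ℝ} (hp : 0 < p) (hr : 0 ≤ r)
    (u : ℝ) : 0 < p + r * schottky b c u := by
  have := schottky_pos hbc hc u
  positivity

lemma hasDerivAt_schottkyRatio {p r u : ℝ} (hu : p + r * schottky b c u ≠ 0) :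
    HasDerivAt (schottkyRatio b c p r)
      (p * deriv (schottky b c) u / (p + r * schottky b c u) ^ 2) u := by
  have hB := (hasDerivAt_schottky (b := b) (c := c) u).differentiableAt.hasDerivAt
  exact (hB.div ((hB.const_mul r).const_add p) hu).congr_deriv (by field_simp; ring)

theorem coeffs_eq_zero_of_schottkyRatio_relation (hbc : c < b) (hc : 0 < c) {p r : ℝ}
    (hp : 0 < p) (hr : 0 ≤ r) {A B C α γ : ℝ}
    (h : ∀ u, A + B * schottkyRatio b c p r u + C * schottkyRatio b c p r u ^ 2
      = (α * u + γ) * deriv (schottkyRatio b c p r) u) :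
    A = 0 ∧ B = 0 ∧ C = 0 ∧ α = 0 ∧ γ = 0 := by
  obtain ⟨hA, hB, hC, hα, hγ⟩ := coeffs_eq_zero_of_schottky_relation hbc hc
    (A := A * p ^ 2) (P := p * (2 * A * r + B)) (Q := A * r ^ 2 + B * r + C)
    (α := -p * α) (γ := -p * γ) fun u => by
      have hD := (schottky_denom_pos hbc hc hp hr u).ne'
      have hu := h u
      rw [(hasDerivAt_schottkyRatio hD).deriv, schottkyRatio] at hu
      generalize schottky b c u = S at hu hD
      generalize deriv (schottky b c) u = S' at hu
      rw [mul_comm] at hD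
      field_simp at hu
      linear_combination hu
  have hA : A = 0 := by simpa [hp.ne'] using hA
  subst hA
  have hB : B = 0 := by simpa [hp.ne'] using hB
  subst hB
  exact ⟨rfl, rfl, by simpa using hC, by simpa [hp.ne'] using hα, by simpa [hp.ne'] using hγ⟩

end Schottky

theorem lsc_forces_translation_ansatz2
    (b c p r : ℝ) (hbc : c < b) (hc : 0 < c) (hp : 0 < p) (hr : 0 < r)
    (β ω : ℝ → ℝ → ℝ)
    (hβ : ∀ x y, β x y = ((b - c) * Real.exp (-b * (x - y * r)) + c) * Real.exp (c * (x - y * r)))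
    (hω : ∀ x y, ω x y = β x y / (p + r * β x y))
    (c₁ c₂ c₃ c₄ c₅ c₆ : ℝ)
    (ξ η : ℝ → ℝ → ℝ)
    (hξ : ∀ x y, ξ x y = c₁ * x + c₂ * y + c₃)
    (hη : ∀ x y, η x y = c₄ * x + c₅ * y + c₆)
    (hlsc : ∀ x y,
      deriv (fun t => η t y) x
        + (deriv (fun t => η x t) y - deriv (fun t => ξ t y) x) * ω x y
        - deriv (fun t => ξ x t) y * (ω x y) ^ 2
      = ξ x y * deriv (fun t => ω t y) x + η x y * deriv (fun t => ω x t) y) :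
    c₁ = 0 ∧ c₂ = 0 ∧ c₄ = 0 ∧ c₅ = 0 ∧ c₃ = r * c₆ := by
  set W := schottkyRatio b c p r
  have hωW : ω = fun x y => W (x - y * r) := by
    funext x y
    rw [hω, hβ]
    rfl
  subst hωW
  have hrel : ∀ x, c₄ + (c₅ - c₁) * W x + (-c₂) * W x ^ 2
      = ((c₁ - r * c₄) * x + (c₃ - r * c₆)) * deriv W x := by
    intro x
    have hW : DifferentiableAt ℝ W x :=
      (hasDerivAt_schottkyRatio (schottky_denom_pos hbc hc hp hr.le x).ne').differentiableAt
    have hin : HasDerivAt (fun t => x - t * r) (-r) 0 := by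
      simpa using ((hasDerivAt_mul_const r).const_sub x : HasDerivAt _ _ (0 : ℝ))
    have hy : deriv (fun t => W (x - t * r)) 0 = -r * deriv W x :=
      (hW.hasDerivAt.comp_of_eq 0 hin (by simp)).deriv.trans (mul_comm _ _)
    have h := hlsc x 0
    simp only [hξ, hη, hy, deriv_add_const', deriv_const_mul_id', deriv_const_add', mul_zero,
      zero_mul, add_zero, sub_zero, neg_mul, mul_neg] at h
    linear_combination h
  obtain ⟨h₄, h₅₁, h₂, h₁₄, h₃₆⟩ := coeffs_eq_zero_of_schottkyRatio_relation hbc hc hp hr.le hrel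
  rw [h₄, mul_zero, sub_zero] at h₁₄
  refine ⟨h₁₄, neg_eq_zero.mp h₂, h₄, ?_, ?_⟩ <;> linarith
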